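/- arXiv:1810.13006 — 2 statements merged into one kernel-verified Lean document; each statement's English description precedes it below -/
import Mathlib

section
/- For N ≥ 3 and ℓ = ⌊(N-1)/2⌋, the maximum achievable rate of the aligned secret sharing scheme is R = 1/(2ℓ + 1), attained at (r_A, r_B) = (1, 1). -/
/-- For `N ≥ 3` and `ℓ = ⌊(N-1)/2⌋`, the maximum achievable rate is `1/(2ℓ+1)`,
attained at `(rA, rB) = (1, 1)`. -/
theorem stmt_3 (N ℓ : ℕ) (hN : 3 ≤ N) (hℓ : ℓ = (N - 1) / 2) :
    ((1 : ℚ) * 1) / (((1 : ℚ) + ℓ) * ((1 : ℚ) + 1) - 1) = 1 / (2 * (ℓ : ℚ) + 1) ∧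
    ((1 + ℓ) * (1 + 1) - 1 ≤ N) ∧
    (∀ rA rB : ℕ, 0 < rA → 0 < rB → (rA + ℓ) * (rB + 1) - 1 ≤ N →
      ((rA : ℚ) * rB) / (((rA : ℚ) + ℓ) * ((rB : ℚ) + 1) - 1) ≤ 1 / (2 * (ℓ : ℚ) + 1)) := by
  have hℓ1 : 1 ≤ ℓ := by omega
  have hN2 : N ≤ 2 * ℓ + 2 := by omega
  refine ⟨by ring_nf, by omega, ?_⟩
  intro rA rB hA hB hcon
  have hprod : (rA + ℓ) * (rB + 1) ≤ 2 * ℓ + 3 := by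
    have h2 : 1 * 2 ≤ (rA + ℓ) * (rB + 1) :=
      Nat.mul_le_mul (by omega : 1 ≤ rA + ℓ) (by omega : 2 ≤ rB + 1)
    omega
  have hrB : rB = 1 := by
    by_contra h
    have h3 : (1 + ℓ) * 3 ≤ (rA + ℓ) * (rB + 1) :=
      Nat.mul_le_mul (by omega : 1 + ℓ ≤ rA + ℓ) (by omega : 3 ≤ rB + 1)
    omega
  have hrA : rA = 1 := by
    subst hrB
    nlinarith [hprod]
  subst hrA hrB
  push_cast
  rw [show ((1 : ℚ) + ℓ) * ((1 : ℚ) + 1) - 1 = 2 * (ℓ : ℚ) + 1 by ring]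
  norm_num
end

section
/- Let ℓ ≥ 1 and N be positive integers and let (r₁A, r₁B) and (r₂A, r₂B) be two pairs of positive integers, each satisfying (r_A + ℓ)(r_B + 1) - 1 ≤ N, with (r₁A, r₁B) strongly feasible in its first coordinate (i.e., (r₁A + 1 + ℓ)(r₁B + 1) - 1 > N) and r₁A + 1 ≥ r₁B and r₂B ≥ r₁B. Let Q₁ = (r₁A + ℓ)(r₁B + 1) - 1 and Q₂ = (r₂A + ℓ)(r₂B + 1) - 1. Then r₁B/Q₁ ≤ r₂B/Q₂. -/
/-- Key natural-number inequality. -/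
lemma stmt_10_nat (N ℓ : ℕ) (hℓ : 1 ≤ ℓ)
    (r1A r1B r2A r2B : ℕ)
    (h1A : 0 < r1A) (h1B : 0 < r1B) (h2A : 0 < r2A) (h2B : 0 < r2B)
    (hfeas2 : (r2A + ℓ) * (r2B + 1) - 1 ≤ N)
    (hstrong1 : N < (r1A + 1 + ℓ) * (r1B + 1) - 1)
    (hAB : r1B ≤ r1A + 1) (hBB : r1B ≤ r2B) :
    r1B * ((r2A + ℓ) * (r2B + 1) - 1) ≤ r2B * ((r1A + ℓ) * (r1B + 1) - 1) := by
  set Q1 := (r1A + ℓ) * (r1B + 1) - 1 with hQ1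
  set Q2 := (r2A + ℓ) * (r2B + 1) - 1 with hQ2
  have h1 : (r1A + ℓ) * (r1B + 1) = Q1 + 1 := by
    have : 1 ≤ (r1A + ℓ) * (r1B + 1) := Nat.one_le_iff_ne_zero.mpr (by positivity)
    omega
  have h2 : (r2A + ℓ) * (r2B + 1) = Q2 + 1 := by
    have : 1 ≤ (r2A + ℓ) * (r2B + 1) := Nat.one_le_iff_ne_zero.mpr (by positivity)
    omega
  -- N ≤ Q1 + r1B
  have hstrong' : (r1A + 1 + ℓ) * (r1B + 1) = Q1 + 1 + (r1B + 1) := by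
    have : (r1A + 1 + ℓ) * (r1B + 1) = (r1A + ℓ) * (r1B + 1) + (r1B + 1) := by ring
    omega
  have hN1 : N ≤ Q1 + r1B := by omega
  have hQ2N : Q2 ≤ N := hfeas2
  -- Q1 ≥ r1B^2
  have hQ1big : r1B * r1B ≤ Q1 := by
    have h3 : r1B ≤ r1A + ℓ := by omega
    have := Nat.mul_le_mul h3 (le_refl (r1B + 1))
    nlinarith [h1]
  rcases Nat.lt_or_ge r1B r2B with hlt | hge
  · -- r2B ≥ r1B + 1
    have : r1B * Q2 ≤ r1B * (Q1 + r1B) := Nat.mul_le_mul_left _ (by omega)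
    nlinarith
  · -- r2B = r1B : show Q2 ≤ Q1 via divisibility
    have heq : r2B = r1B := le_antisymm hge hBB
    subst heq
    have hQle : Q2 ≤ Q1 := by
      by_contra hcon
      push_neg at hcon
      have h4 : (r1A + ℓ) * (r2B + 1) < (r2A + ℓ) * (r2B + 1) := by omega
      have h5 : r1A + ℓ < r2A + ℓ := lt_of_mul_lt_mul_right h4 (Nat.zero_le _)
      have h6 : (r1A + ℓ + 1) * (r2B + 1) ≤ (r2A + ℓ) * (r2B + 1) :=
        Nat.mul_le_mul_right _ (by omega)
      nlinarith
    exact Nat.mul_le_mul_left _ hQle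

/-- Comparison of the rate increments of two (strongly) feasible pairs. -/
theorem stmt_10 (N ℓ : ℕ) (hℓ : 1 ≤ ℓ) (hN : 0 < N)
    (r1A r1B r2A r2B : ℕ)
    (h1A : 0 < r1A) (h1B : 0 < r1B) (h2A : 0 < r2A) (h2B : 0 < r2B)
    (hfeas1 : (r1A + ℓ) * (r1B + 1) - 1 ≤ N)
    (hfeas2 : (r2A + ℓ) * (r2B + 1) - 1 ≤ N)
    (hstrong1 : N < (r1A + 1 + ℓ) * (r1B + 1) - 1)
    (hAB : r1B ≤ r1A + 1) (hBB : r1B ≤ r2B) :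
    (r1B : ℚ) / (((r1A : ℚ) + ℓ) * ((r1B : ℚ) + 1) - 1) ≤
      (r2B : ℚ) / (((r2A : ℚ) + ℓ) * ((r2B : ℚ) + 1) - 1) := by
  have key := stmt_10_nat N ℓ hℓ r1A r1B r2A r2B h1A h1B h2A h2B hfeas2 hstrong1 hAB hBB
  have e1 : (((r1A + ℓ) * (r1B + 1) - 1 : ℕ) : ℚ)
      = ((r1A : ℚ) + ℓ) * ((r1B : ℚ) + 1) - 1 := by
    have : 1 ≤ (r1A + ℓ) * (r1B + 1) := Nat.one_le_iff_ne_zero.mpr (by positivity)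
    push_cast [Nat.cast_sub this]
    ring
  have e2 : (((r2A + ℓ) * (r2B + 1) - 1 : ℕ) : ℚ)
      = ((r2A : ℚ) + ℓ) * ((r2B : ℚ) + 1) - 1 := by
    have : 1 ≤ (r2A + ℓ) * (r2B + 1) := Nat.one_le_iff_ne_zero.mpr (by positivity)
    push_cast [Nat.cast_sub this]
    ring
  have p1 : (0:ℚ) < ((r1A : ℚ) + ℓ) * ((r1B : ℚ) + 1) - 1 := by
    rw [← e1]
    have : 0 < (r1A + ℓ) * (r1B + 1) - 1 := by
      have : 2 * 2 ≤ (r1A + ℓ) * (r1B + 1) := Nat.mul_le_mul (by omega) (by omega)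
      omega
    exact_mod_cast this
  have p2 : (0:ℚ) < ((r2A : ℚ) + ℓ) * ((r2B : ℚ) + 1) - 1 := by
    rw [← e2]
    have : 0 < (r2A + ℓ) * (r2B + 1) - 1 := by
      have : 2 * 2 ≤ (r2A + ℓ) * (r2B + 1) := Nat.mul_le_mul (by omega) (by omega)
      omega
    exact_mod_cast this
  rw [div_le_div_iff₀ p1 p2, ← e1, ← e2]
  exact_mod_cast key
end
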